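/- Any nontrivial semigroup S with a zero element is not an equational domain: the set M = {(x₁,x₂,x₃,x₄) ∈ S⁴ : x₁ = x₂ or x₃ = x₄} is not the solution set of any system of semigroup equations with constants in S. -/

import Mathlib

/-- A term over `S` in `n` variables: a nonempty list of factors, each a variable or constant. -/
structure SemigroupTerm (S : Type*) (n : ℕ) where
  head : Fin n ⊕ S
  tail : List (Fin n ⊕ S)

/-- Left-to-right product of a nonempty list in a semigroup. -/
def prodList {S : Type*} [Semigroup S] : S → List S → S
  | a, [] => a
  | a, b :: l => prodList (a * b) l

/-- Evaluation of a term at a point `X`. -/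
def SemigroupTerm.eval {S : Type*} [Semigroup S] {n : ℕ}
    (t : SemigroupTerm S n) (X : Fin n → S) : S :=
  prodList (Sum.elim X id t.head) (t.tail.map (Sum.elim X id))

/-! Pick `a ≠ z` and put `Y = ![a, z, a, z] ∉ M`. Setting `Y 1` or `Y 3` to `a` gives points of `M`,
and every equation `t = s` valid at both of these points holds at `Y` as well: a term containing
variable `1` or `3` is absorbed by the zero at `Y`; a term containing neither takes the same value at
`Y` and at the modified points; and if only `t` contains `1` or `3`, then `s` at `Y` equals the value
of `t` at the modified point that keeps a variable occurring in `t` equal to `z`, so it is `z` too. -/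

section

open Function

variable {S : Type*} [Semigroup S] {z : S}

theorem prodList_eq_of_mem (hz : ∀ s : S, z * s = z ∧ s * z = z) :
    ∀ {a : S} {l : List S}, z ∈ a :: l → prodList a l = z
  | a, [], h => (List.mem_singleton.mp h).symm
  | a, b :: l, h => by
    refine prodList_eq_of_mem hz (l := l) (a := a * b) ?_
    rcases List.mem_cons.mp h with rfl | h
    · rw [(hz b).1]; exact List.mem_cons_self
    rcases List.mem_cons.mp h with rfl | h
    · rw [(hz a).2]; exact List.mem_cons_self
    · exact List.mem_cons_of_mem _ h

namespace SemigroupTerm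

variable {n : ℕ}

def Occurs (t : SemigroupTerm S n) (i : Fin n) : Prop :=
  Sum.inl i ∈ t.head :: t.tail

theorem eval_congr {t : SemigroupTerm S n} {X X' : Fin n → S}
    (h : ∀ i, t.Occurs i → X i = X' i) : t.eval X = t.eval X' := by
  have hfactor : ∀ f ∈ t.head :: t.tail, Sum.elim X id f = Sum.elim X' id f := by
    rintro (i | c) hf
    · exact h i hf
    · rfl
  unfold eval
  rw [hfactor _ List.mem_cons_self,
    List.map_congr_left fun f hf => hfactor f (List.mem_cons_of_mem _ hf)]

theorem eval_update_of_not_occurs {t : SemigroupTerm S n} {i : Fin n} (h : ¬t.Occurs i)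
    (X : Fin n → S) (b : S) : t.eval (update X i b) = t.eval X :=
  eval_congr fun k hk => update_of_ne (by rintro rfl; exact h hk) b X

theorem eval_eq_of_occurs (hz : ∀ s : S, z * s = z ∧ s * z = z) {t : SemigroupTerm S n}
    {X : Fin n → S} {i : Fin n} (h : t.Occurs i) (hX : X i = z) : t.eval X = z := by
  apply prodList_eq_of_mem hz
  rw [← List.map_cons, ← hX]
  exact List.mem_map_of_mem (f := Sum.elim X id) h

variable {t s : SemigroupTerm S n} {Y : Fin n → S} {i j : Fin n}

theorem eval_eq_of_occurs_or (hz : ∀ s : S, z * s = z ∧ s * z = z)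
    (h : t.Occurs i ∨ t.Occurs j) (hi : Y i = z) (hj : Y j = z) : t.eval Y = z :=
  h.elim (eval_eq_of_occurs hz · hi) (eval_eq_of_occurs hz · hj)

theorem eval_eq_of_not_occurs_of_eval_update_eq (hz : ∀ s : S, z * s = z ∧ s * z = z)
    (hij : i ≠ j) (hi : Y i = z) (hj : Y j = z) (a b : S)
    (hA : t.eval (update Y i a) = s.eval (update Y i a))
    (hB : t.eval (update Y j b) = s.eval (update Y j b))
    (ht : t.Occurs i ∨ t.Occurs j) (hsi : ¬s.Occurs i) (hsj : ¬s.Occurs j) :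
    s.eval Y = z := by
  rcases ht with ht | ht
  · rw [← eval_update_of_not_occurs hsj Y b, ← hB]
    exact eval_eq_of_occurs hz ht (by rwa [update_of_ne hij])
  · rw [← eval_update_of_not_occurs hsi Y a, ← hA]
    exact eval_eq_of_occurs hz ht (by rwa [update_of_ne hij.symm])

theorem eval_eq_of_eval_update_eq (hz : ∀ s : S, z * s = z ∧ s * z = z)
    (hij : i ≠ j) (hi : Y i = z) (hj : Y j = z) (a b : S)
    (hA : t.eval (update Y i a) = s.eval (update Y i a))
    (hB : t.eval (update Y j b) = s.eval (update Y j b)) :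
    t.eval Y = s.eval Y := by
  by_cases ht : t.Occurs i ∨ t.Occurs j <;> by_cases hs : s.Occurs i ∨ s.Occurs j
  · rw [eval_eq_of_occurs_or hz ht hi hj, eval_eq_of_occurs_or hz hs hi hj]
  · obtain ⟨hsi, hsj⟩ := not_or.mp hs
    rw [eval_eq_of_occurs_or hz ht hi hj,
      eval_eq_of_not_occurs_of_eval_update_eq hz hij hi hj a b hA hB ht hsi hsj]
  · obtain ⟨hti, htj⟩ := not_or.mp ht
    rw [eval_eq_of_occurs_or hz hs hi hj,
      eval_eq_of_not_occurs_of_eval_update_eq hz hij hi hj a b hA.symm hB.symm hs hti htj]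
  · rw [← eval_update_of_not_occurs (not_or.mp ht).1 Y a,
      ← eval_update_of_not_occurs (not_or.mp hs).1 Y a, hA]

end SemigroupTerm

end

/-- A nontrivial semigroup with a zero is not an equational domain: the set
`M = {(x₁,x₂,x₃,x₄) : x₁ = x₂ or x₃ = x₄}` is not the solution set of any system of
equations with constants in `S`. -/
theorem stmt17 {S : Type*} [Semigroup S] (z : S)
    (hz : ∀ s : S, z * s = z ∧ s * z = z) (hnt : ∃ s : S, s ≠ z) :
    ¬∃ (ι : Type) (t s : ι → SemigroupTerm S 4),
      ∀ X : Fin 4 → S,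
        (∀ j : ι, (t j).eval X = (s j).eval X) ↔ (X 0 = X 1 ∨ X 2 = X 3) := by
  rintro ⟨ι, t, s, hM⟩
  obtain ⟨a, ha⟩ := hnt
  let Y : Fin 4 → S := ![a, z, a, z]
  have hY : ∀ j, (t j).eval Y = (s j).eval Y := fun j =>
    SemigroupTerm.eval_eq_of_eval_update_eq hz (i := 1) (j := 3) (by decide) rfl rfl a a
      ((hM _).mpr (Or.inl (by simp [Y])) j) ((hM _).mpr (Or.inr (by simp [Y])) j)
  rcases (hM Y).mp hY with h | h <;> exact ha h
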